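/- (Theorem 3.1.) Let g : [0,1]^N → ℝ^M be a low-rank tensor-product model g(x) = Σ_{r=1}^R v_r ∏_{n=1}^N g_{n,r}(x_n), where each g_{n,r} : [0,1] → ℝ is continuously differentiable, each v_r ≠ 0, each g_{n,r} has nonzero L² norm, and ⟨g_{n,r}, g_{n,k}⟩ ≠ 0 for all n, r, k. Define s_r := ‖v_r‖ ∏_{n=1}^N ‖g_{n,r}‖, A⁰_{r,k} := (⟨v_r, v_k⟩/(‖v_r‖‖v_k‖)) ∏_{n=1}^N ⟨g_{n,r}, g_{n,k}⟩/(‖g_{n,r}‖‖g_{n,k}‖), A¹_{r,k} := Σ_{n=1}^N ⟨g'_{n,r}, g'_{n,k}⟩/⟨g_{n,r}, g_{n,k}⟩, and Z_{r,k} := A⁰_{r,k} A¹_{r,k}. Then the Dirichlet energy satisfies DE(g) = ∫_{[0,1]^N} ‖∇g(x)‖_F² dx = Σ_{r=1}^R Σ_{k=1}^R s_r Z_{r,k} s_k. -/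

import Mathlib

/-!
Write `G = ∑ r, p r • v r` with `p r x = ∏ n, g n r (x n)`. Pointwise, the squared Frobenius norm
of the Jacobian is `∑ r, ∑ k, ⟪v r, v k⟫ * ⟪∇ p r, ∇ p k⟫`, and `∂_q p r * ∂_q p k` is again a
product of univariate functions, so Fubini on the cube gives
`∫ ⟪∇ p r, ∇ p k⟫ = ∑ q, ⟪g' q r, g' q k⟫ * ∏ n ≠ q, ⟪g n r, g n k⟫`. Factoring out the nonzero
`∏ n, ⟪g n r, g n k⟫` produces `A1 r k`, and the normalisations in `s` and `A0` cancel.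
-/

open MeasureTheory Finset

section

variable {ι : Type*} [Fintype ι]

theorem integral_univ_pi_prod (s : ι → Set ℝ) (f : ι → ℝ → ℝ) :
    ∫ x in Set.univ.pi s, ∏ i, f i (x i) = ∏ i, ∫ t in s i, f i t := by
  rw [volume_pi, Measure.restrict_pi_pi]
  exact integral_fintype_prod_eq_prod f

theorem integral_univ_pi_prod_erase_mul [DecidableEq ι] (s : ι → Set ℝ) (f : ι → ℝ → ℝ)
    (q : ι) (h : ℝ → ℝ) :
    ∫ x in Set.univ.pi s, (∏ i ∈ univ.erase q, f i (x i)) * h (x q) =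
      (∫ t in s q, h t) * ∏ i ∈ univ.erase q, ∫ t in s i, f i t := by
  have key : ∀ x : ι → ℝ, (∏ i ∈ univ.erase q, f i (x i)) * h (x q) =
      ∏ i, Function.update f q h i (x i) := by
    intro x
    simp only [Function.apply_update (fun i (φ : ℝ → ℝ) => φ (x i)),
      prod_update_of_mem (mem_univ q), sdiff_singleton_eq_erase, mul_comm]
  simp only [key, integral_univ_pi_prod,
    Function.apply_update (fun i (φ : ℝ → ℝ) => ∫ t in s i, φ t),
    prod_update_of_mem (mem_univ q), sdiff_singleton_eq_erase]

theorem contDiff_prod_apply {n : WithTop ℕ∞} {f : ι → ℝ → ℝ} (hf : ∀ i, ContDiff ℝ n (f i)) :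
    ContDiff ℝ n (fun x : ι → ℝ => ∏ i, f i (x i)) :=
  contDiff_prod fun i _ => (hf i).comp (contDiff_apply ℝ ℝ i)

theorem fderiv_prod_apply_single [DecidableEq ι] {f : ι → ℝ → ℝ} {x : ι → ℝ}
    (hf : ∀ i, DifferentiableAt ℝ (f i) (x i)) (q : ι) :
    fderiv ℝ (fun y : ι → ℝ => ∏ i, f i (y i)) x (Pi.single q 1) =
      (∏ i ∈ univ.erase q, f i (x i)) * deriv (f q) (x q) := by
  have hpart : ∀ i ∈ (univ : Finset ι), HasFDerivAt (fun y : ι → ℝ => f i (y i))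
      (deriv (f i) (x i) • ContinuousLinearMap.proj i) x := fun i _ =>
    (hf i).hasDerivAt.comp_hasFDerivAt x
      (ContinuousLinearMap.proj (R := ℝ) (φ := fun _ : ι => ℝ) i).hasFDerivAt
  rw [(HasFDerivAt.finsetProd hpart).fderiv]
  simp [Pi.single_apply]

theorem integral_sum_fderiv_prod_mul_fderiv_prod [DecidableEq ι] {s : ι → Set ℝ}
    (hs : ∀ i, IsCompact (s i)) {f h : ι → ℝ → ℝ} (hf : ∀ i, ContDiff ℝ 1 (f i))
    (hh : ∀ i, ContDiff ℝ 1 (h i)) :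
    ∫ x in Set.univ.pi s, ∑ q, fderiv ℝ (fun y : ι → ℝ => ∏ i, f i (y i)) x (Pi.single q 1) *
        fderiv ℝ (fun y : ι → ℝ => ∏ i, h i (y i)) x (Pi.single q 1) =
      ∑ q, (∫ t in s q, deriv (f q) t * deriv (h q) t) *
        ∏ i ∈ univ.erase q, ∫ t in s i, f i t * h i t := by
  have hcont : ∀ {φ : ι → ℝ → ℝ}, (∀ i, ContDiff ℝ 1 (φ i)) → ∀ q, Continuous fun x =>
      fderiv ℝ (fun y : ι → ℝ => ∏ i, φ i (y i)) x (Pi.single q 1) := fun hφ _ =>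
    ((contDiff_prod_apply hφ).continuous_fderiv one_ne_zero).clm_apply continuous_const
  rw [integral_finsetSum _ fun q _ =>
    ((hcont hf q).fun_mul (hcont hh q)).continuousOn.integrableOn_compact
    (isCompact_univ_pi hs)]
  refine sum_congr rfl fun q _ => ?_
  have hpartial : ∀ {φ : ι → ℝ → ℝ}, (∀ i, ContDiff ℝ 1 (φ i)) → ∀ x,
      fderiv ℝ (fun y : ι → ℝ => ∏ i, φ i (y i)) x (Pi.single q 1) =
        (∏ i ∈ univ.erase q, φ i (x i)) * deriv (φ q) (x q) := fun hφ x =>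
    fderiv_prod_apply_single (fun i => (hφ i).differentiable one_ne_zero _) q
  simp only [hpartial hf, hpartial hh]
  rw [← integral_univ_pi_prod_erase_mul s (fun i t => f i t * h i t)]
  refine integral_congr_ae (Filter.Eventually.of_forall fun x => ?_)
  simp only [prod_mul_distrib]
  ring

theorem prod_mul_prod_mul_prod_div_mul {α β : ι → ℝ} (hα : ∀ i, α i ≠ 0) (hβ : ∀ i, β i ≠ 0)
    (c : ι → ℝ) : (∏ i, α i) * (∏ i, β i) * ∏ i, c i / (α i * β i) = ∏ i, c i := by
  rw [← prod_mul_distrib, ← prod_mul_distrib]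
  exact prod_congr rfl fun i _ => by field_simp [hα i, hβ i]

theorem prod_mul_sum_div_eq_sum_mul_prod_erase [DecidableEq ι] {b : ι → ℝ} (hb : ∀ i, b i ≠ 0)
    (d : ι → ℝ) : (∏ i, b i) * ∑ q, d q / b q = ∑ q, d q * ∏ i ∈ univ.erase q, b i := by
  rw [mul_sum]
  refine sum_congr rfl fun q _ => ?_
  rw [← mul_prod_erase univ b (mem_univ q)]
  field_simp [hb q]

end

theorem norm_sum_smul_sq {E : Type*} [NormedAddCommGroup E] [InnerProductSpace ℝ E]
    {κ : Type*} (s : Finset κ) (c : κ → ℝ) (v : κ → E) :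
    ‖∑ r ∈ s, c r • v r‖ ^ 2 = ∑ r ∈ s, ∑ k ∈ s, c r * c k * inner ℝ (v r) (v k) := by
  rw [← real_inner_self_eq_norm_sq, sum_inner]
  simp only [inner_sum, real_inner_smul_left, real_inner_smul_right]
  exact sum_congr rfl fun r _ => sum_congr rfl fun k _ => by ring

theorem fderiv_sum_smul_const_apply {E F ρ : Type*} [NormedAddCommGroup E] [NormedSpace ℝ E]
    [NormedAddCommGroup F] [NormedSpace ℝ F] [Fintype ρ] {p : ρ → E → ℝ} {x : E}
    (hp : ∀ r, DifferentiableAt ℝ (p r) x) (v : ρ → F) (y : E) :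
    fderiv ℝ (fun z => ∑ r, p r z • v r) x y = ∑ r, fderiv ℝ (p r) x y • v r := by
  rw [fderiv_fun_sum fun r _ => (hp r).smul_const (v r)]
  simp [fderiv_smul_const (hp _)]

theorem sum_sq_fderiv_sum_smul_apply {E κ ρ Q : Type*} [NormedAddCommGroup E] [NormedSpace ℝ E]
    [Fintype κ] [Fintype ρ] [Fintype Q] {p : ρ → E → ℝ} {x : E}
    (hp : ∀ r, DifferentiableAt ℝ (p r) x) (v : ρ → EuclideanSpace ℝ κ) (e : Q → E) :
    ∑ i, ∑ q, (fderiv ℝ (fun z => ∑ r, p r z • v r) x (e q) i) ^ 2 =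
      ∑ r, ∑ k, inner ℝ (v r) (v k) * ∑ q, fderiv ℝ (p r) x (e q) * fderiv ℝ (p k) x (e q) := by
  rw [sum_comm]
  simp only [← EuclideanSpace.real_norm_sq_eq, fderiv_sum_smul_const_apply hp, norm_sum_smul_sq]
  rw [sum_comm]
  refine sum_congr rfl fun r _ => ?_
  rw [sum_comm]
  refine sum_congr rfl fun k _ => ?_
  rw [mul_sum]
  exact sum_congr rfl fun q _ => by ring

theorem norm_mul_norm_mul_inner_div {E : Type*} [NormedAddCommGroup E] [InnerProductSpace ℝ E]
    (u v : E) : ‖u‖ * ‖v‖ * (inner ℝ u v / (‖u‖ * ‖v‖)) = inner ℝ u v := by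
  rcases eq_or_ne u 0 with rfl | hu
  · simp
  rcases eq_or_ne v 0 with rfl | hv
  · simp
  field_simp

theorem tpbs_dirichlet_energy_sZs_general (N M R : ℕ)
    (v : Fin R → EuclideanSpace ℝ (Fin M))
    (g : Fin N → Fin R → ℝ → ℝ)
    (hg : ∀ n r, ContDiff ℝ 1 (g n r))
    (hnorm : ∀ n r, Real.sqrt (∫ t in (0:ℝ)..1, (g n r t) ^ 2) ≠ 0)
    (hip : ∀ n r k, (∫ t in (0:ℝ)..1, g n r t * g n k t) ≠ 0)
    (G : (Fin N → ℝ) → EuclideanSpace ℝ (Fin M))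
    (hG : ∀ x, G x = ∑ r, (∏ n, g n r (x n)) • v r)
    (s : Fin R → ℝ)
    (hs : ∀ r, s r = ‖v r‖ * ∏ n, Real.sqrt (∫ t in (0:ℝ)..1, (g n r t) ^ 2))
    (A0 A1 Z : Fin R → Fin R → ℝ)
    (hA0 : ∀ r k, A0 r k = ((inner ℝ (v r) (v k) : ℝ) / (‖v r‖ * ‖v k‖)) *
        ∏ n, (∫ t in (0:ℝ)..1, g n r t * g n k t) /
          (Real.sqrt (∫ t in (0:ℝ)..1, (g n r t) ^ 2) *
            Real.sqrt (∫ t in (0:ℝ)..1, (g n k t) ^ 2)))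
    (hA1 : ∀ r k, A1 r k = ∑ n,
        (∫ t in (0:ℝ)..1, deriv (g n r) t * deriv (g n k) t) /
          (∫ t in (0:ℝ)..1, g n r t * g n k t))
    (hZ : ∀ r k, Z r k = A0 r k * A1 r k) :
    (∫ x in Set.univ.pi fun _ : Fin N => Set.Icc (0:ℝ) 1,
        ∑ i : Fin M, ∑ q : Fin N, (fderiv ℝ G x (Pi.single q 1) i) ^ 2) =
      ∑ r, ∑ k, s r * Z r k * s k := by
  set p : Fin R → (Fin N → ℝ) → ℝ := fun r y => ∏ n, g n r (y n)
  have hp : ∀ r, ContDiff ℝ 1 (p r) := fun r => contDiff_prod_apply (hg · r)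
  have hint : ∀ r k, IntegrableOn (fun x => inner ℝ (v r) (v k) *
      ∑ q : Fin N, fderiv ℝ (p r) x (Pi.single q 1) * fderiv ℝ (p k) x (Pi.single q 1))
      (Set.univ.pi fun _ => Set.Icc 0 1) := by
    intro r k
    have hr := (hp r).continuous_fderiv one_ne_zero
    have hk := (hp k).continuous_fderiv one_ne_zero
    exact (by fun_prop : Continuous _).continuousOn.integrableOn_compact
      (isCompact_univ_pi fun _ => isCompact_Icc)
  rw [funext hG, integral_congr_ae (Filter.Eventually.of_forall fun x =>
    sum_sq_fderiv_sum_smul_apply (fun r => (hp r).differentiable one_ne_zero x) v _),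
    integral_finsetSum _ fun r _ => integrable_finsetSum _ fun k _ => hint r k]
  refine sum_congr rfl fun r _ => ?_
  rw [integral_finsetSum _ fun k _ => hint r k]
  refine sum_congr rfl fun k _ => ?_
  rw [integral_const_mul, integral_sum_fderiv_prod_mul_fderiv_prod (fun _ => isCompact_Icc)
    (hg · r) (hg · k)]
  simp only [integral_Icc_eq_integral_Ioc, ← intervalIntegral.integral_of_le zero_le_one]
  have regroup : ∀ a b c d e f g : ℝ, a * b * (c * d * e) * (f * g) = a * f * c * (b * g * d * e) :=
    fun _ _ _ _ _ _ _ => by ring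
  rw [hs, hs, hZ, hA0, hA1, regroup, norm_mul_norm_mul_inner_div,
    prod_mul_prod_mul_prod_div_mul (hnorm · r) (hnorm · k),
    prod_mul_sum_div_eq_sum_mul_prod_erase (hip · r k)]

/-- Theorem 3.1: the Dirichlet energy of a low-rank tensor-product model with C¹ univariate
factors satisfies `DE(g) = Σ_r Σ_k s_r Z_{r,k} s_k`, where `s_r = ‖v_r‖ ∏_n ‖g_{n,r}‖`,
`Z_{r,k} = A⁰_{r,k} A¹_{r,k}`, `A⁰` is the product of cosines and `A¹` the sum of ratios of
inner products of derivatives over inner products of the factors. -/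
theorem tpbs_dirichlet_energy_sZs (N M R : ℕ)
    (v : Fin R → EuclideanSpace ℝ (Fin M))
    (g : Fin N → Fin R → ℝ → ℝ)
    (hg : ∀ n r, ContDiff ℝ 1 (g n r))
    (hv : ∀ r, v r ≠ 0)
    (hnorm : ∀ n r, Real.sqrt (∫ t in (0:ℝ)..1, (g n r t) ^ 2) ≠ 0)
    (hip : ∀ n r k, (∫ t in (0:ℝ)..1, g n r t * g n k t) ≠ 0)
    (G : (Fin N → ℝ) → EuclideanSpace ℝ (Fin M))
    (hG : ∀ x, G x = ∑ r, (∏ n, g n r (x n)) • v r)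
    (s : Fin R → ℝ)
    (hs : ∀ r, s r = ‖v r‖ * ∏ n, Real.sqrt (∫ t in (0:ℝ)..1, (g n r t) ^ 2))
    (A0 A1 Z : Fin R → Fin R → ℝ)
    (hA0 : ∀ r k, A0 r k = ((inner ℝ (v r) (v k) : ℝ) / (‖v r‖ * ‖v k‖)) *
        ∏ n, (∫ t in (0:ℝ)..1, g n r t * g n k t) /
          (Real.sqrt (∫ t in (0:ℝ)..1, (g n r t) ^ 2) *
            Real.sqrt (∫ t in (0:ℝ)..1, (g n k t) ^ 2)))
    (hA1 : ∀ r k, A1 r k = ∑ n,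
        (∫ t in (0:ℝ)..1, deriv (g n r) t * deriv (g n k) t) /
          (∫ t in (0:ℝ)..1, g n r t * g n k t))
    (hZ : ∀ r k, Z r k = A0 r k * A1 r k) :
    (∫ x in Set.univ.pi fun _ : Fin N => Set.Icc (0:ℝ) 1,
        ∑ i : Fin M, ∑ q : Fin N, (fderiv ℝ G x (Pi.single q 1) i) ^ 2) =
      ∑ r, ∑ k, s r * Z r k * s k :=
  tpbs_dirichlet_energy_sZs_general N M R v g hg hnorm hip G hG s hs A0 A1 Z hA0 hA1 hZ
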